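/- arXiv:2008.06829 — 4 statements merged into one kernel-verified Lean document; each statement's English description precedes it below -/
import Mathlib

section
/- For every real z > 0, the ratio K₁(z)/K₀(z) of modified Bessel functions of the second kind satisfies the two-sided bound (√(z² + z + 1) + 1)/(z + 1) < K₁(z)/K₀(z) < 1 + 1/(2z). -/
/-!
Write `E = exp (-z cosh t)` and `c = cosh t`. Integrating
`d/dt [E sinh t / (c + 1)] = E (1 / (c + 1) - z (c - 1))` over `(0, ∞)` gives
`z (K₁ - K₀) = ∫ E / (c + 1)`, and since `2 / (c + 1) < 1` for `t > 0` this is `< K₀ / 2`: the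
upper bound. Cauchy–Schwarz for the weight `E` and the factors `c + 1`, `1 / (c + 1)` gives
`K₀² ≤ (K₁ + K₀) · z (K₁ - K₀)`, i.e. `z (k² - 1) ≥ 1` for `k = K₁ / K₀`. Then
`(z + 1) k² - 2 k - z ≥ (k - 1)² > 0`, so `k` exceeds the positive root
`(√(z² + z + 1) + 1) / (z + 1)` of that quadratic.
-/

open Real

/-- Modified Bessel function of the second kind of order `j`:
`K_j(z) = ∫₀^∞ exp (−z cosh t) * cosh (j t) dt`. -/
noncomputable def besselK (j : ℕ) (z : ℝ) : ℝ :=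
  ∫ t in Set.Ioi (0 : ℝ), Real.exp (-z * Real.cosh t) * Real.cosh ((j : ℝ) * t)

open MeasureTheory Set Filter Topology

lemma setIntegral_pos_of_forall_pos {X : Type*} [MeasurableSpace X] {μ : Measure X} {s : Set X}
    {f : X → ℝ} (hs : MeasurableSet s) (hμs : 0 < μ s) (hf : IntegrableOn f s μ)
    (hpos : ∀ x ∈ s, 0 < f x) : 0 < ∫ x in s, f x ∂μ := by
  rw [setIntegral_pos_iff_support_of_nonneg_ae
    (ae_restrict_of_forall_mem hs fun x hx => (hpos x hx).le) hf]
  exact hμs.trans_le (measure_mono fun x hx => ⟨(hpos x hx).ne', hx⟩)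

/-- Cauchy–Schwarz for `√(w u)` and `√(w / u)`. -/
lemma sq_integral_le_integral_mul_mul_integral_div {X : Type*} [MeasurableSpace X]
    {μ : Measure X} {w u : X → ℝ} (hw : ∀ x, 0 ≤ w x) (hu : ∀ x, 0 < u x)
    (hw_int : Integrable w μ) (hwu : Integrable (fun x => w x * u x) μ)
    (hwu' : Integrable (fun x => w x / u x) μ) :
    (∫ x, w x ∂μ) ^ 2 ≤ (∫ x, w x * u x ∂μ) * ∫ x, w x / u x ∂μ := by
  have hquad : ∀ a : ℝ, 0 ≤ (∫ x, w x / u x ∂μ) * (a * a) + (-2 * ∫ x, w x ∂μ) * a +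
      ∫ x, w x * u x ∂μ := by
    intro a
    have hexpand : ∀ x, w x * (u x - a) ^ 2 / u x =
        w x / u x * (a * a) + -2 * w x * a + w x * u x := fun x => by
      field_simp [(hu x).ne']
      ring
    calc 0 ≤ ∫ x, w x * (u x - a) ^ 2 / u x ∂μ :=
          integral_nonneg fun x => div_nonneg (mul_nonneg (hw x) (sq_nonneg _)) (hu x).le
      _ = _ := by
        simp_rw [hexpand]
        rw [integral_add (f := fun x => w x / u x * (a * a) + -2 * w x * a)
            ((hwu'.mul_const (a * a)).add ((hw_int.const_mul (-2)).mul_const a)) hwu,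
          integral_add (hwu'.mul_const (a * a)) ((hw_int.const_mul (-2)).mul_const a),
          integral_mul_const, integral_mul_const, integral_const_mul]
  have := discrim_le_zero hquad
  rw [discrim] at this
  linarith

lemma self_le_cosh (t : ℝ) : t ≤ cosh t :=
  calc t ≤ |t| := le_abs_self t
    _ ≤ sinh |t| := self_le_sinh_iff.2 (abs_nonneg t)
    _ ≤ cosh t := cosh_abs t ▸ (sinh_lt_cosh _).le

lemma abs_sinh_div_cosh_add_one_le_one (t : ℝ) : |sinh t / (cosh t + 1)| ≤ 1 := by
  have hc : 0 < cosh t + 1 := by linarith [one_le_cosh t]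
  rw [abs_div, abs_of_pos hc, div_le_one hc, abs_sinh, ← cosh_abs t]
  linarith [sinh_lt_cosh |t|]

section ExpCoshIntegral

variable {z : ℝ}

noncomputable def expCoshIntegral (z : ℝ) (g : ℝ → ℝ) : ℝ :=
  ∫ t in Ioi (0 : ℝ), exp (-z * cosh t) * g (cosh t)

def ExpCoshIntegrable (z : ℝ) (g : ℝ → ℝ) : Prop :=
  IntegrableOn (fun t => exp (-z * cosh t) * g (cosh t)) (Ioi 0)

lemma besselK_zero_eq (z : ℝ) : besselK 0 z = expCoshIntegral z fun _ => 1 := by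
  simp [besselK, expCoshIntegral]

lemma besselK_one_eq (z : ℝ) : besselK 1 z = expCoshIntegral z fun c => c := by
  simp [besselK, expCoshIntegral]

lemma exp_neg_mul_cosh_mul_cosh_le (hz : 0 < z) (t : ℝ) :
    exp (-z * cosh t) * cosh t ≤ 2 / z * exp (-(z / 2) * t) := by
  have hc : z * cosh t / 2 ≤ exp (z * cosh t / 2) := by
    linarith [add_one_le_exp (z * cosh t / 2)]
  calc exp (-z * cosh t) * cosh t ≤ exp (-z * cosh t) * (2 / z * exp (z * cosh t / 2)) := by
        gcongr
        rw [div_mul_eq_mul_div, le_div_iff₀ hz]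
        linarith
    _ = 2 / z * exp (-(z / 2) * cosh t) := by
        rw [mul_left_comm, ← exp_add]
        ring_nf
    _ ≤ 2 / z * exp (-(z / 2) * t) := by
        gcongr 2 / z * exp ?_
        nlinarith [self_le_cosh t]

lemma ExpCoshIntegrable.of_abs_le (hz : 0 < z) {g : ℝ → ℝ} (hg : Measurable g) (M : ℝ)
    (hbound : ∀ c, 1 ≤ c → |g c| ≤ M * c) : ExpCoshIntegrable z g := by
  refine Integrable.mono' ((exp_neg_integrableOn_Ioi 0 (half_pos hz)).const_mul (M * (2 / z)))
    (by fun_prop) (ae_restrict_of_forall_mem measurableSet_Ioi fun t _ => ?_)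
  have hM : 0 ≤ M := nonneg_of_mul_nonneg_left ((abs_nonneg _).trans (hbound 1 le_rfl)) one_pos
  calc ‖exp (-z * cosh t) * g (cosh t)‖ ≤ exp (-z * cosh t) * (M * cosh t) := by
        rw [norm_mul, norm_of_nonneg (exp_pos _).le, norm_eq_abs]
        gcongr
        exact hbound _ (one_le_cosh t)
    _ = M * (exp (-z * cosh t) * cosh t) := by ring
    _ ≤ M * (2 / z) * exp (-(z / 2) * t) := by
        rw [mul_assoc]
        exact mul_le_mul_of_nonneg_left (exp_neg_mul_cosh_mul_cosh_le hz t) hM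

lemma expCoshIntegrable_one (hz : 0 < z) : ExpCoshIntegrable z fun _ => 1 :=
  .of_abs_le hz measurable_const 1 fun c hc => by simpa using hc

lemma expCoshIntegrable_id (hz : 0 < z) : ExpCoshIntegrable z fun c => c :=
  .of_abs_le hz measurable_id 1 fun c hc => by rw [one_mul, abs_of_nonneg (by linarith)]

lemma expCoshIntegrable_inv_add_one (hz : 0 < z) : ExpCoshIntegrable z fun c => (c + 1)⁻¹ :=
  .of_abs_le hz (by fun_prop) 1 fun c hc => by
    rw [one_mul, abs_of_pos (by positivity)]
    exact (inv_le_one_of_one_le₀ (by linarith)).trans hc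

lemma ExpCoshIntegrable.add {f g : ℝ → ℝ} (hf : ExpCoshIntegrable z f)
    (hg : ExpCoshIntegrable z g) : ExpCoshIntegrable z fun c => f c + g c := by
  simp only [ExpCoshIntegrable, mul_add]
  exact Integrable.add hf hg

lemma ExpCoshIntegrable.sub {f g : ℝ → ℝ} (hf : ExpCoshIntegrable z f)
    (hg : ExpCoshIntegrable z g) : ExpCoshIntegrable z fun c => f c - g c := by
  simp only [ExpCoshIntegrable, mul_sub]
  exact Integrable.sub hf hg

lemma ExpCoshIntegrable.const_mul {g : ℝ → ℝ} (hg : ExpCoshIntegrable z g) (a : ℝ) :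
    ExpCoshIntegrable z fun c => a * g c := by
  simp only [ExpCoshIntegrable, mul_left_comm _ a]
  exact Integrable.const_mul hg a

lemma expCoshIntegral_add {f g : ℝ → ℝ} (hf : ExpCoshIntegrable z f)
    (hg : ExpCoshIntegrable z g) :
    expCoshIntegral z (fun c => f c + g c) = expCoshIntegral z f + expCoshIntegral z g := by
  simp only [expCoshIntegral, mul_add]
  exact integral_add hf hg

lemma expCoshIntegral_sub {f g : ℝ → ℝ} (hf : ExpCoshIntegrable z f)
    (hg : ExpCoshIntegrable z g) :
    expCoshIntegral z (fun c => f c - g c) = expCoshIntegral z f - expCoshIntegral z g := by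
  simp only [expCoshIntegral, mul_sub]
  exact integral_sub hf hg

lemma expCoshIntegral_const_mul (a : ℝ) (g : ℝ → ℝ) :
    expCoshIntegral z (fun c => a * g c) = a * expCoshIntegral z g := by
  simp only [expCoshIntegral, mul_left_comm _ a]
  exact integral_const_mul a _

lemma expCoshIntegral_pos {g : ℝ → ℝ} (hint : ExpCoshIntegrable z g)
    (hpos : ∀ c, 1 < c → 0 < g c) : 0 < expCoshIntegral z g :=
  setIntegral_pos_of_forall_pos measurableSet_Ioi (by simp) hint fun t ht =>
    mul_pos (exp_pos _) (hpos _ (one_lt_cosh.2 (ne_of_gt ht)))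

end ExpCoshIntegral

lemma hasDerivAt_exp_neg_mul_cosh_mul_sinh_div (z t : ℝ) :
    HasDerivAt (fun t => exp (-z * cosh t) * (sinh t / (cosh t + 1)))
      (exp (-z * cosh t) * ((cosh t + 1)⁻¹ - z * (cosh t - 1))) t := by
  have hc : cosh t + 1 ≠ 0 := by linarith [one_le_cosh t]
  refine (((hasDerivAt_cosh t).const_mul (-z)).exp.mul
    ((hasDerivAt_sinh t).fun_div ((hasDerivAt_cosh t).add_const 1) hc)).congr_deriv ?_
  field_simp
  linear_combination (-(z * (cosh t + 1)) - 1) * sinh_sq t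

lemma tendsto_exp_neg_mul_cosh_mul_sinh_div {z : ℝ} (hz : 0 < z) :
    Tendsto (fun t => exp (-z * cosh t) * (sinh t / (cosh t + 1))) atTop (𝓝 0) := by
  have hexp : Tendsto (fun t => exp (-z * cosh t)) atTop (𝓝 0) :=
    tendsto_exp_atBot.comp <|
      (tendsto_atTop_mono self_le_cosh tendsto_id).const_mul_atTop_of_neg (neg_neg_of_pos hz)
  refine squeeze_zero_norm (fun t => ?_) hexp
  rw [norm_mul, norm_of_nonneg (exp_pos _).le, norm_eq_abs]
  exact mul_le_of_le_one_right (exp_pos _).le (abs_sinh_div_cosh_add_one_le_one t)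

section Bessel

variable {z : ℝ}

lemma besselK_zero_pos (hz : 0 < z) : 0 < besselK 0 z :=
  besselK_zero_eq z ▸ expCoshIntegral_pos (expCoshIntegrable_one hz) fun _ _ => one_pos

lemma besselK_one_pos (hz : 0 < z) : 0 < besselK 1 z :=
  besselK_one_eq z ▸ expCoshIntegral_pos (expCoshIntegrable_id hz) fun _ hc => by linarith

lemma expCoshIntegral_inv_add_one (hz : 0 < z) :
    expCoshIntegral z (fun c => (c + 1)⁻¹) = z * (besselK 1 z - besselK 0 z) := by
  have hsub := (expCoshIntegrable_id hz).sub (expCoshIntegrable_one hz)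
  have hFTC : expCoshIntegral z (fun c => (c + 1)⁻¹ - z * (c - 1)) = 0 := by
    have := integral_Ioi_of_hasDerivAt_of_tendsto'
      (fun t _ => hasDerivAt_exp_neg_mul_cosh_mul_sinh_div z t)
      ((expCoshIntegrable_inv_add_one hz).sub (hsub.const_mul z))
      (tendsto_exp_neg_mul_cosh_mul_sinh_div hz)
    simpa [expCoshIntegral] using this
  rw [expCoshIntegral_sub (expCoshIntegrable_inv_add_one hz) (hsub.const_mul z),
    expCoshIntegral_const_mul, expCoshIntegral_sub (expCoshIntegrable_id hz)
    (expCoshIntegrable_one hz), sub_eq_zero] at hFTC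
  rw [hFTC, besselK_zero_eq, besselK_one_eq]

lemma two_mul_mul_besselK_one_sub_lt (hz : 0 < z) :
    2 * z * (besselK 1 z - besselK 0 z) < besselK 0 z := by
  have hinv := (expCoshIntegrable_inv_add_one hz).const_mul 2
  have hpos : 0 < expCoshIntegral z fun c => 1 - 2 * (c + 1)⁻¹ :=
    expCoshIntegral_pos ((expCoshIntegrable_one hz).sub hinv) fun c hc => by
      rw [sub_pos, ← div_eq_mul_inv, div_lt_one (by linarith)]
      linarith
  rw [expCoshIntegral_sub (expCoshIntegrable_one hz) hinv, expCoshIntegral_const_mul,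
    expCoshIntegral_inv_add_one hz, ← besselK_zero_eq] at hpos
  linarith

lemma besselK_zero_sq_le (hz : 0 < z) :
    besselK 0 z ^ 2 ≤ z * (besselK 1 z ^ 2 - besselK 0 z ^ 2) := by
  have hCS := sq_integral_le_integral_mul_mul_integral_div (μ := volume.restrict (Ioi 0))
    (w := fun t => exp (-z * cosh t)) (u := fun t => cosh t + 1) (fun _ => (exp_pos _).le)
    (fun t => by linarith [one_le_cosh t])
    (by simpa [ExpCoshIntegrable, IntegrableOn] using expCoshIntegrable_one hz)
    ((expCoshIntegrable_id hz).add (expCoshIntegrable_one hz))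
    (by simpa [ExpCoshIntegrable, IntegrableOn, div_eq_mul_inv] using
      expCoshIntegrable_inv_add_one hz)
  have hK0 : ∫ t in Ioi 0, exp (-z * cosh t) = besselK 0 z := by simp [besselK]
  have hA : ∫ t in Ioi 0, exp (-z * cosh t) * (cosh t + 1) = besselK 1 z + besselK 0 z := by
    rw [besselK_zero_eq, besselK_one_eq, ← expCoshIntegral_add (expCoshIntegrable_id hz)
      (expCoshIntegrable_one hz)]
    rfl
  have hC : ∫ t in Ioi 0, exp (-z * cosh t) / (cosh t + 1) =
      z * (besselK 1 z - besselK 0 z) := by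
    rw [← expCoshIntegral_inv_add_one hz]
    simp only [expCoshIntegral, div_eq_mul_inv]
  rw [hK0, hA, hC] at hCS
  linarith

end Bessel

lemma sqrt_add_one_div_lt_of_one_le {z k : ℝ} (hz : 0 < z) (hk : 0 < k)
    (h : 1 ≤ z * (k ^ 2 - 1)) : (√(z ^ 2 + z + 1) + 1) / (z + 1) < k := by
  have hk1 : 1 < k := by
    by_contra! hk1
    nlinarith [mul_nonneg hz.le (by nlinarith : 0 ≤ 1 - k ^ 2)]
  -- `(k (z + 1) - 1)² - (z² + z + 1) = (z + 1) ((k² - 1) z - 1 + (k - 1)²)`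
  have hquad : 0 < k ^ 2 * (z + 1) - 2 * k - z := by nlinarith [pow_pos (sub_pos.2 hk1) 2]
  rw [div_lt_iff₀ (by linarith), ← lt_sub_iff_add_lt, sqrt_lt' (by nlinarith)]
  nlinarith [mul_pos (by linarith : 0 < z + 1) hquad]

theorem bessel_ratio_bounds (z : ℝ) (hz : 0 < z) :
    (Real.sqrt (z ^ 2 + z + 1) + 1) / (z + 1) < besselK 1 z / besselK 0 z ∧
    besselK 1 z / besselK 0 z < 1 + 1 / (2 * z) := by
  have hK0 := besselK_zero_pos hz
  refine ⟨sqrt_add_one_div_lt_of_one_le hz (div_pos (besselK_one_pos hz) hK0) ?_, ?_⟩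
  · have := besselK_zero_sq_le hz
    rw [div_pow, div_sub_one (by positivity), mul_div_assoc', le_div_iff₀ (by positivity)]
    linarith
  · have := two_mul_mul_besselK_one_sub_lt hz
    rw [div_lt_iff₀ hK0]
    field_simp
    linarith
end

section
/- For every real z with 0 < z < 1, the modified Bessel function of the second kind of order one satisfies z·K₁(z) ≥ 1 − z²·(1 + |log z|). -/
open Real

/-!
Split `cosh t = sinh t + e^{-t}` in the exponent and use `e^{-x} ≥ 1 - x` on the factor
`exp (-z e^{-t})`: this bounds `z K₁(z)` below by integrals of `exp (-z sinh t)` against elementary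
weights. Two of them are exact derivatives (of `-exp (-z sinh t)` and `-e^{-t} exp (-z sinh t)`),
which leaves `z K₁(z) ≥ 1 - z + z J(z)` with `J(z) = ∫₀^∞ e^{-t} exp (-z sinh t) dt`. Since
`e^{-t} sinh t ≤ 1/2`, the integrand of `J` is at least `e^{-t} - z/2`; integrating this on
`(0, log (2/z)]` gives `J(z) ≥ 1 - z/2 - (z/2) log (2/z)`, so
`z K₁(z) ≥ 1 - (z²/2) (1 + log 2 - log z)`, and `log 2 < 1`.
-/

open MeasureTheory Set Filter Topology

lemma tendsto_sinh_atTop : Tendsto sinh atTop atTop :=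
  tendsto_atTop_mono' atTop ((eventually_ge_atTop 0).mono fun _ ht => self_le_sinh_iff.2 ht)
    tendsto_id

lemma tendsto_exp_neg_mul_sinh_atTop {z : ℝ} (hz : 0 < z) :
    Tendsto (fun t => exp (-(z * sinh t))) atTop (𝓝 0) :=
  tendsto_exp_atBot.comp (tendsto_neg_atTop_atBot.comp (tendsto_sinh_atTop.const_mul_atTop hz))

lemma exp_neg_mul_sinh_mul_le_exp_neg_mul_cosh (z t : ℝ) :
    exp (-(z * sinh t)) * (1 - z * exp (-t)) ≤ exp (-z * cosh t) := by
  have hsplit : exp (-z * cosh t) = exp (-(z * sinh t)) * exp (-(z * exp (-t))) := by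
    rw [← exp_add, ← cosh_sub_sinh]
    ring_nf
  rw [hsplit]
  gcongr
  linarith [add_one_le_exp (-(z * exp (-t)))]

lemma exp_neg_sub_half_le_exp_neg_mul_exp_neg_mul_sinh {z : ℝ} (hz : 0 ≤ z) (t : ℝ) :
    exp (-t) - z / 2 ≤ exp (-t) * exp (-(z * sinh t)) := by
  have hsinh : exp (-t) * sinh t ≤ 1 / 2 := by
    rw [sinh_eq, ← mul_div_assoc, mul_sub, ← exp_add, neg_add_cancel, exp_zero]
    linarith [(exp_pos (-t)).le, mul_pos (exp_pos (-t)) (exp_pos (-t))]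
  have hexp : 1 - z * sinh t ≤ exp (-(z * sinh t)) := by
    linarith [add_one_le_exp (-(z * sinh t))]
  nlinarith [mul_le_mul_of_nonneg_left hexp (exp_pos (-t)).le]

lemma hasDerivAt_neg_exp_neg_mul_sinh (z t : ℝ) :
    HasDerivAt (fun t => -exp (-(z * sinh t))) (z * cosh t * exp (-(z * sinh t))) t :=
  (((hasDerivAt_sinh t).const_mul z).fun_neg.exp).fun_neg.congr_deriv (by ring)

lemma hasDerivAt_neg_exp_neg_mul_exp_neg_mul_sinh (z t : ℝ) :
    HasDerivAt (fun t => -(exp (-t) * exp (-(z * sinh t))))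
      (exp (-t) * exp (-(z * sinh t)) * (1 + z * cosh t)) t :=
  (((hasDerivAt_neg t).exp).mul ((hasDerivAt_sinh t).const_mul z).fun_neg.exp).fun_neg.congr_deriv
    (by ring)

lemma integrableOn_mul_cosh_mul_exp_neg_mul_sinh {z : ℝ} (hz : 0 < z) :
    IntegrableOn (fun t => z * cosh t * exp (-(z * sinh t))) (Ioi 0) :=
  integrableOn_Ioi_deriv_of_nonneg' (fun t _ => hasDerivAt_neg_exp_neg_mul_sinh z t)
    (fun t _ => by positivity) (tendsto_exp_neg_mul_sinh_atTop hz).neg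

lemma integral_mul_cosh_mul_exp_neg_mul_sinh {z : ℝ} (hz : 0 < z) :
    ∫ t in Ioi 0, z * cosh t * exp (-(z * sinh t)) = 1 := by
  rw [integral_Ioi_of_hasDerivAt_of_nonneg' (fun t _ => hasDerivAt_neg_exp_neg_mul_sinh z t)
    (fun t _ => by positivity) (tendsto_exp_neg_mul_sinh_atTop hz).neg]
  simp

lemma integrableOn_exp_neg_mul_exp_neg_mul_sinh_mul {z : ℝ} (hz : 0 < z) :
    IntegrableOn (fun t => exp (-t) * exp (-(z * sinh t)) * (1 + z * cosh t)) (Ioi 0) :=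
  integrableOn_Ioi_deriv_of_nonneg'
    (fun t _ => hasDerivAt_neg_exp_neg_mul_exp_neg_mul_sinh z t) (fun t _ => by positivity)
    ((tendsto_exp_neg_atTop_nhds_zero.mul (tendsto_exp_neg_mul_sinh_atTop hz)).neg)

lemma integral_exp_neg_mul_exp_neg_mul_sinh_mul {z : ℝ} (hz : 0 < z) :
    ∫ t in Ioi 0, exp (-t) * exp (-(z * sinh t)) * (1 + z * cosh t) = 1 := by
  rw [integral_Ioi_of_hasDerivAt_of_nonneg'
    (fun t _ => hasDerivAt_neg_exp_neg_mul_exp_neg_mul_sinh z t) (fun t _ => by positivity)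
    ((tendsto_exp_neg_atTop_nhds_zero.mul (tendsto_exp_neg_mul_sinh_atTop hz)).neg)]
  simp

lemma integrableOn_exp_neg_mul_exp_neg_mul_sinh {z : ℝ} (hz : 0 < z) :
    IntegrableOn (fun t => exp (-t) * exp (-(z * sinh t))) (Ioi 0) :=
  (integrableOn_exp_neg_mul_exp_neg_mul_sinh_mul hz).mono' (by fun_prop) <|
    (ae_restrict_mem measurableSet_Ioi).mono fun t _ => by
      rw [norm_of_nonneg (by positivity)]
      exact le_mul_of_one_le_right (by positivity) (le_add_of_nonneg_right (by positivity))

lemma integrableOn_mul_cosh_mul_exp_neg_mul_cosh {z : ℝ} (hz : 0 < z) :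
    IntegrableOn (fun t => z * cosh t * exp (-z * cosh t)) (Ioi 0) :=
  (integrableOn_mul_cosh_mul_exp_neg_mul_sinh hz).mono' (by fun_prop) <|
    (ae_restrict_mem measurableSet_Ioi).mono fun t _ => by
      rw [norm_of_nonneg (by positivity)]
      have := sinh_lt_cosh t
      gcongr
      nlinarith

lemma mul_besselK_one_ge {z : ℝ} (hz : 0 < z) :
    1 - z + z * ∫ t in Ioi 0, exp (-t) * exp (-(z * sinh t)) ≤ z * besselK 1 z := by
  have hK : z * besselK 1 z = ∫ t in Ioi 0, z * cosh t * exp (-z * cosh t) := by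
    rw [besselK, ← integral_const_mul]
    congr 1 with t
    rw [Nat.cast_one, one_mul]
    ring
  have hA := integrableOn_mul_cosh_mul_exp_neg_mul_sinh hz
  have hB := integrableOn_exp_neg_mul_exp_neg_mul_sinh_mul hz
  have hJ := integrableOn_exp_neg_mul_exp_neg_mul_sinh hz
  calc 1 - z + z * ∫ t in Ioi 0, exp (-t) * exp (-(z * sinh t))
      = ∫ t in Ioi 0, (z * cosh t * exp (-(z * sinh t))
          - z * (exp (-t) * exp (-(z * sinh t)) * (1 + z * cosh t))
          + z * (exp (-t) * exp (-(z * sinh t)))) := by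
        rw [integral_add _ (hJ.const_mul z), integral_sub hA (hB.const_mul z),
          integral_const_mul, integral_const_mul, integral_mul_cosh_mul_exp_neg_mul_sinh hz,
          integral_exp_neg_mul_exp_neg_mul_sinh_mul hz, mul_one]
        exact hA.sub (hB.const_mul z)
    _ ≤ ∫ t in Ioi 0, z * cosh t * exp (-z * cosh t) := by
        refine setIntegral_mono_on ((hA.sub (hB.const_mul z)).add (hJ.const_mul z))
          (integrableOn_mul_cosh_mul_exp_neg_mul_cosh hz) measurableSet_Ioi fun t _ => ?_
        have := mul_le_mul_of_nonneg_left (exp_neg_mul_sinh_mul_le_exp_neg_mul_cosh z t)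
          (by positivity : 0 ≤ z * cosh t)
        linarith
    _ = z * besselK 1 z := hK.symm

lemma integral_exp_neg_mul_exp_neg_mul_sinh_ge {z : ℝ} (hz : 0 < z) {L : ℝ} (hL : 0 ≤ L) :
    1 - exp (-L) - z / 2 * L ≤ ∫ t in Ioi 0, exp (-t) * exp (-(z * sinh t)) :=
  calc 1 - exp (-L) - z / 2 * L = ∫ t in (0)..L, (exp (-t) - z / 2) := by
        rw [intervalIntegral.integral_sub
          ((by fun_prop : Continuous fun t => exp (-t)).intervalIntegrable _ _)
          intervalIntegrable_const,
          intervalIntegral.integral_comp_neg (fun t => exp t), integral_exp,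
          intervalIntegral.integral_const]
        simp only [neg_zero, exp_zero, sub_zero, smul_eq_mul]
        ring
    _ ≤ ∫ t in Ioc 0 L, exp (-t) * exp (-(z * sinh t)) := by
        rw [intervalIntegral.integral_of_le hL]
        exact setIntegral_mono_on
          (by fun_prop : Continuous fun t => exp (-t) - z / 2).integrableOn_Ioc
          ((integrableOn_exp_neg_mul_exp_neg_mul_sinh hz).mono_set Ioc_subset_Ioi_self)
          measurableSet_Ioc fun t _ => exp_neg_sub_half_le_exp_neg_mul_exp_neg_mul_sinh hz.le t
    _ ≤ ∫ t in Ioi 0, exp (-t) * exp (-(z * sinh t)) :=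
        setIntegral_mono_set (integrableOn_exp_neg_mul_exp_neg_mul_sinh hz)
          (.of_forall fun t => by positivity) Ioc_subset_Ioi_self.eventuallyLE

theorem besselK1_lower_bound (z : ℝ) (h0 : 0 < z) (h1 : z < 1) :
    z * besselK 1 z ≥ 1 - z ^ 2 * (1 + |Real.log z|) := by
  have hlog : log z < 0 := log_neg h0 h1
  have hL : 0 ≤ log (2 / z) := log_nonneg (by rw [le_div_iff₀ h0]; linarith)
  have hexpL : exp (-log (2 / z)) = z / 2 := by rw [exp_neg, exp_log (by positivity)]; field_simp
  have hJ := integral_exp_neg_mul_exp_neg_mul_sinh_ge h0 hL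
  rw [hexpL, log_div two_ne_zero h0.ne'] at hJ
  have hK := mul_besselK_one_ge h0
  rw [abs_of_neg hlog]
  nlinarith [log_two_lt_d9, mul_le_mul_of_nonneg_left hJ h0.le]
end

section
/- For every real ε > 0 and every positive integer k, writing K_j = K_j(πεk) for j = 0, 1, one has 2K₀K₁ + πεk·(K₀² − K₁²) > 0, and the quantity λᵗ = 4π²εk·K₁² / (2K₀K₁ + πεk·(K₀² − K₁²)) satisfies the growth bounds 4π²εk < λᵗ < 4π²εk + 2π. -/
open Real

/-!
With `M n = coshMoment n z = ∫₀^∞ e^{-z cosh s} (cosh s + 1)^n ds` one has `K₀ = M 0` and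
`K₁ = M 1 - M 0`. Integrating the derivative of `e^{-z cosh s} sinh s (cosh s + 1)^m` over `(0, ∞)`
gives the recurrence `z (M(m+2) - 2 M(m+1)) = (m+1) M(m+1) - (2m+1) M m`, Cauchy–Schwarz gives
`M n ^ 2 ≤ M(n-1) M(n+1)`, and `cosh s + 1 ≥ 2` gives `2 M(n-1) ≤ M n`. The recurrence at `m = -1`
turns the denominator into `2 K₀ K₁ - M 1 · M(-1)`, and with the recurrence at `m = -2` both bounds
on `λᵗ` become polynomial inequalities in `M 1, M 0, M(-1), M(-2)` that follow from the moment
inequalities.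
-/

open MeasureTheory Set Filter Topology

theorem sq_integral_le_integral_mul_integral_of_sq_le_mul {α : Type*} [MeasurableSpace α]
    {μ : Measure α} {f g h : α → ℝ} (hf : Integrable f μ) (hg : Integrable g μ)
    (hh : Integrable h μ) (hg₀ : ∀ x, 0 ≤ g x) (hh₀ : ∀ x, 0 ≤ h x)
    (hfgh : ∀ x, f x ^ 2 ≤ g x * h x) :
    (∫ x, f x ∂μ) ^ 2 ≤ (∫ x, g x ∂μ) * ∫ x, h x ∂μ := by
  have hquad (t : ℝ) :
      0 ≤ (∫ x, g x ∂μ) * (t * t) + (-2 * ∫ x, f x ∂μ) * t + ∫ x, h x ∂μ := by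
    have hpt (x : α) : 0 ≤ g x * (t * t) + -2 * f x * t + h x := by
      rcases (hg₀ x).eq_or_lt with hg0 | hgpos
      · have hf0 : f x = 0 := by
          have := hfgh x
          rw [← hg0, zero_mul] at this
          exact pow_eq_zero_iff two_ne_zero |>.1 (le_antisymm this (sq_nonneg _))
        simp [← hg0, hf0, hh₀ x]
      · nlinarith [sq_nonneg (t * g x - f x), hfgh x]
    have hgf : Integrable (fun x => g x * (t * t) + -2 * f x * t) μ :=
      (hg.mul_const _).add ((hf.const_mul _).mul_const _)
    calc 0 ≤ ∫ x, g x * (t * t) + -2 * f x * t + h x ∂μ := integral_nonneg hpt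
      _ = _ := by
        rw [integral_add hgf hh, integral_add (hg.mul_const _) ((hf.const_mul _).mul_const _),
          integral_mul_const, integral_mul_const, integral_const_mul]
  have := discrim_le_zero hquad
  rw [discrim] at this
  nlinarith

lemma integrableOn_exp_neg_mul_cosh_mul_cosh {z : ℝ} (hz : 0 < z) :
    IntegrableOn (fun s => exp (-z * cosh s) * cosh s) (Ioi 0) := by
  refine ((exp_neg_integrableOn_Ioi 0 (half_pos hz)).const_mul (2 / z)).mono' (by fun_prop) ?_
  filter_upwards [ae_restrict_mem measurableSet_Ioi] with s (hs : 0 < s)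
  have hsc : s ≤ cosh s := (self_le_sinh_iff.2 hs.le).trans (sinh_lt_cosh s).le
  have hlin : z * cosh s / 2 ≤ exp (z * cosh s / 2) := by
    linarith [add_one_le_exp (z * cosh s / 2)]
  have hsplit : exp (-z * cosh s) = exp (-(z * cosh s / 2)) * exp (-(z * cosh s / 2)) := by
    rw [← exp_add]; ring_nf
  rw [Real.norm_of_nonneg (by positivity)]
  calc exp (-z * cosh s) * cosh s
      = 2 / z * (z * cosh s / 2 * exp (-(z * cosh s / 2))) * exp (-(z * cosh s / 2)) := by
        rw [hsplit]; field_simp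
    _ ≤ 2 / z * (exp (z * cosh s / 2) * exp (-(z * cosh s / 2))) * exp (-(z / 2) * s) := by
        gcongr
        nlinarith
    _ = 2 / z * exp (-(z / 2) * s) := by rw [← exp_add]; simp

noncomputable def coshMoment (n : ℤ) (z : ℝ) : ℝ :=
  ∫ s in Ioi (0 : ℝ), exp (-z * cosh s) * (cosh s + 1) ^ n

lemma integrableOn_exp_neg_mul_cosh_mul_zpow {z : ℝ} (hz : 0 < z) {n : ℤ} (hn : n ≤ 1) :
    IntegrableOn (fun s => exp (-z * cosh s) * (cosh s + 1) ^ n) (Ioi 0) := by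
  refine ((integrableOn_exp_neg_mul_cosh_mul_cosh hz).const_mul 2).mono' (by fun_prop) ?_
  refine .of_forall fun s => ?_
  have h1 : 1 ≤ cosh s + 1 := by linarith [cosh_pos s]
  have hle : (cosh s + 1) ^ n ≤ cosh s + 1 := by
    simpa using zpow_le_zpow_right₀ h1 hn
  rw [Real.norm_of_nonneg (by positivity)]
  nlinarith [one_le_cosh s, exp_pos (-z * cosh s)]

lemma coshMoment_pos {z : ℝ} (hz : 0 < z) {n : ℤ} (hn : n ≤ 1) : 0 < coshMoment n z := by
  rw [coshMoment, setIntegral_pos_iff_support_of_nonneg_ae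
    (.of_forall fun s => by positivity) (integrableOn_exp_neg_mul_cosh_mul_zpow hz hn)]
  have : Function.support (fun s => exp (-z * cosh s) * (cosh s + 1) ^ n) = univ :=
    Function.support_eq_univ fun s => by positivity
  rw [this, univ_inter]
  simp

lemma two_mul_coshMoment_sub_one_le {z : ℝ} (hz : 0 < z) {n : ℤ} (hn : n ≤ 1) :
    2 * coshMoment (n - 1) z ≤ coshMoment n z := by
  rw [coshMoment, coshMoment, ← integral_const_mul]
  refine integral_mono ((integrableOn_exp_neg_mul_cosh_mul_zpow hz (by omega)).const_mul 2)
    (integrableOn_exp_neg_mul_cosh_mul_zpow hz hn) fun s => ?_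
  have hc : 0 < cosh s + 1 := by positivity
  rw [zpow_sub_one₀ hc.ne']
  have h2 : 2 ≤ cosh s + 1 := by linarith [one_le_cosh s]
  calc 2 * (exp (-z * cosh s) * ((cosh s + 1) ^ n * (cosh s + 1)⁻¹))
      = exp (-z * cosh s) * (cosh s + 1) ^ n * (2 / (cosh s + 1)) := by ring
    _ ≤ exp (-z * cosh s) * (cosh s + 1) ^ n * 1 := by
        gcongr; rwa [div_le_one hc]
    _ = _ := mul_one _

lemma coshMoment_sq_le {z : ℝ} (hz : 0 < z) {n : ℤ} (hn : n ≤ 0) :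
    coshMoment n z ^ 2 ≤ coshMoment (n - 1) z * coshMoment (n + 1) z := by
  refine sq_integral_le_integral_mul_integral_of_sq_le_mul
    (integrableOn_exp_neg_mul_cosh_mul_zpow hz (by omega))
    (integrableOn_exp_neg_mul_cosh_mul_zpow hz (by omega))
    (integrableOn_exp_neg_mul_cosh_mul_zpow hz (by omega))
    (fun s => by positivity) (fun s => by positivity) fun s => le_of_eq ?_
  have hc : cosh s + 1 ≠ 0 := by positivity
  rw [zpow_sub_one₀ hc, zpow_add_one₀ hc]
  field_simp

lemma besselK_zero_eq_coshMoment (z : ℝ) : besselK 0 z = coshMoment 0 z := by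
  simp [besselK, coshMoment]

lemma besselK_one_eq_coshMoment_sub {z : ℝ} (hz : 0 < z) :
    besselK 1 z = coshMoment 1 z - coshMoment 0 z := by
  rw [coshMoment, coshMoment, ← integral_sub (integrableOn_exp_neg_mul_cosh_mul_zpow hz le_rfl)
    (integrableOn_exp_neg_mul_cosh_mul_zpow hz zero_le_one)]
  simp [besselK, mul_add]

lemma hasDerivAt_exp_neg_mul_cosh_mul_sinh_mul_zpow (z : ℝ) (m : ℤ) (x : ℝ) :
    HasDerivAt (fun s => exp (-z * cosh s) * (sinh s * (cosh s + 1) ^ m))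
      (-z * (exp (-z * cosh x) * (cosh x + 1) ^ (m + 2))
        + (2 * z + m + 1) * (exp (-z * cosh x) * (cosh x + 1) ^ (m + 1))
        - (2 * m + 1) * (exp (-z * cosh x) * (cosh x + 1) ^ m)) x := by
  have hc : cosh x + 1 ≠ 0 := by positivity
  have hw : HasDerivAt (fun s => exp (-z * cosh s)) (exp (-z * cosh x) * (-z * sinh x)) x :=
    ((hasDerivAt_cosh x).const_mul (-z)).exp
  have hp : HasDerivAt (fun s => (cosh s + 1) ^ m) (m * (cosh x + 1) ^ (m - 1) * sinh x) x :=
    HasDerivAt.comp (h₂ := fun y => y ^ m) x (hasDerivAt_zpow m (cosh x + 1) (Or.inl hc))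
      ((hasDerivAt_cosh x).add_const 1)
  refine (hw.fun_mul ((hasDerivAt_sinh x).fun_mul hp)).congr_deriv ?_
  rw [zpow_add₀ hc, zpow_add₀ hc, zpow_sub_one₀ hc]
  field_simp
  linear_combination (m - z * (cosh x + 1)) * sinh_sq x

lemma abs_sinh_mul_zpow_le_one {m : ℤ} (hm : m ≤ -1) (s : ℝ) :
    |sinh s * (cosh s + 1) ^ m| ≤ 1 := by
  have hc : 1 ≤ cosh s + 1 := by linarith [cosh_pos s]
  have hpos : 0 < (cosh s + 1) ^ m := zpow_pos (by positivity) m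
  have hsinh : |sinh s| ≤ cosh s + 1 := by
    rw [abs_sinh, ← cosh_abs]; linarith [sinh_lt_cosh |s|]
  have hp : (cosh s + 1) ^ m * (cosh s + 1) ≤ 1 := by
    rw [← zpow_add_one₀ (by positivity : cosh s + 1 ≠ 0)]
    exact zpow_le_one_of_nonpos₀ hc (by omega)
  rw [abs_mul, abs_of_pos hpos]
  nlinarith

lemma coshMoment_recurrence {z : ℝ} (hz : 0 < z) {m : ℤ} (hm : m ≤ -1) :
    z * (coshMoment (m + 2) z - 2 * coshMoment (m + 1) z)
      = (m + 1) * coshMoment (m + 1) z - (2 * m + 1) * coshMoment m z := by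
  have hint (n : ℤ) (hn : n ≤ 1) := integrableOn_exp_neg_mul_cosh_mul_zpow hz hn
  have hdecay :
      Tendsto (fun s => exp (-z * cosh s) * (sinh s * (cosh s + 1) ^ m)) atTop (𝓝 0) := by
    refine squeeze_zero_norm' ?_
      (tendsto_exp_neg_atTop_nhds_zero.comp (tendsto_id.const_mul_atTop hz))
    filter_upwards [eventually_ge_atTop 0] with s hs
    have hsc : s ≤ cosh s := (self_le_sinh_iff.2 hs).trans (sinh_lt_cosh s).le
    rw [norm_mul, Real.norm_of_nonneg (exp_pos _).le, Real.norm_eq_abs]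
    calc exp (-z * cosh s) * |sinh s * (cosh s + 1) ^ m|
        ≤ exp (-z * cosh s) * 1 := by gcongr; exact abs_sinh_mul_zpow_le_one hm s
      _ ≤ exp (-(z * s)) := by rw [mul_one]; gcongr; nlinarith
  have hFTC := integral_Ioi_of_hasDerivAt_of_tendsto'
    (fun x _ => hasDerivAt_exp_neg_mul_cosh_mul_sinh_mul_zpow z m x)
    ((((hint (m + 2) (by omega)).const_mul (-z)).add ((hint (m + 1) (by omega)).const_mul _)).sub
      ((hint m (by omega)).const_mul _)) hdecay
  rw [integral_sub, integral_add, integral_const_mul, integral_const_mul, integral_const_mul]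
    at hFTC
  rotate_left
  · exact (hint (m + 2) (by omega)).const_mul _
  · exact (hint (m + 1) (by omega)).const_mul _
  · exact ((hint (m + 2) (by omega)).const_mul _).add ((hint (m + 1) (by omega)).const_mul _)
  · exact (hint m (by omega)).const_mul _
  simp only [sinh_zero, zero_mul, mul_zero, sub_zero] at hFTC
  unfold coshMoment
  linear_combination -hFTC

lemma tangential_denominator_bounds_of_moments {z a b c d : ℝ} (hz : 0 < z) (hb : 0 < b)
    (hc : 0 < c) (hcb : 2 * c ≤ b) (hab : b ^ 2 ≤ c * a) (hcd : c ^ 2 ≤ d * b)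
    (h₁ : z * (a - 2 * b) = c) (h₂ : z * (b - 2 * c) = -c + 3 * d) :
    0 < 2 * b * (a - b) + z * (b ^ 2 - (a - b) ^ 2) ∧
      2 * b * (a - b) + z * (b ^ 2 - (a - b) ^ 2) < (a - b) ^ 2 ∧
      2 * z * (a - b) ^ 2 < (2 * z + 1) * (2 * b * (a - b) + z * (b ^ 2 - (a - b) ^ 2)) := by
  have ha : 0 < a - 2 * b := pos_of_mul_pos_right (h₁ ▸ hc) hz.le
  have hD : 2 * b * (a - b) + z * (b ^ 2 - (a - b) ^ 2) = 2 * b * (a - b) - a * c := by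
    linear_combination (-a) * h₁
  have hE : (2 * z + 1) * (2 * b * (a - b) + z * (b ^ 2 - (a - b) ^ 2)) - 2 * z * (a - b) ^ 2
      = 2 * a * b - 2 * b ^ 2 - 3 * a * c + 2 * b * c + 6 * b * d - 2 * c ^ 2 := by
    linear_combination (-(2 * z + 1) * a - 2 * (a - 2 * b) - 2 * c) * h₁ + 2 * b * h₂
  refine ⟨?_, ?_, ?_⟩
  · rw [hD]
    nlinarith [mul_le_mul_of_nonneg_left hcb (by linarith : 0 ≤ a), mul_pos hb ha]
  · rw [hD]
    nlinarith [mul_pos ha ha]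
  · nlinarith [mul_pos ha (by linarith : 0 < 2 * b - 3 * c), sq_nonneg (b - c), mul_pos hc hc]

lemma besselK_tangential_denominator_bounds {z : ℝ} (hz : 0 < z) :
    0 < 2 * besselK 0 z * besselK 1 z + z * (besselK 0 z ^ 2 - besselK 1 z ^ 2) ∧
      2 * besselK 0 z * besselK 1 z + z * (besselK 0 z ^ 2 - besselK 1 z ^ 2) < besselK 1 z ^ 2 ∧
      2 * z * besselK 1 z ^ 2 < (2 * z + 1) *
        (2 * besselK 0 z * besselK 1 z + z * (besselK 0 z ^ 2 - besselK 1 z ^ 2)) := by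
  have h₁ := coshMoment_recurrence hz (m := -1) le_rfl
  have h₂ := coshMoment_recurrence hz (m := -2) (by norm_num)
  have hcb := two_mul_coshMoment_sub_one_le hz (n := 0) zero_le_one
  have hab := coshMoment_sq_le hz (n := 0) le_rfl
  have hcd := coshMoment_sq_le hz (n := -1) (by norm_num)
  norm_num at h₁ h₂ hcb hab hcd
  rw [besselK_zero_eq_coshMoment, besselK_one_eq_coshMoment_sub hz]
  exact tangential_denominator_bounds_of_moments hz (coshMoment_pos hz zero_le_one)
    (coshMoment_pos hz (by norm_num)) hcb hab hcd h₁ h₂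

theorem stokes_tangential_eigenvalue_growth (ε : ℝ) (hε : 0 < ε) (k : ℕ) (hk : 1 ≤ k) :
    0 < 2 * besselK 0 (π * ε * (k : ℝ)) * besselK 1 (π * ε * (k : ℝ)) +
        π * ε * (k : ℝ) *
          ((besselK 0 (π * ε * (k : ℝ))) ^ 2 - (besselK 1 (π * ε * (k : ℝ))) ^ 2) ∧
    4 * π ^ 2 * ε * (k : ℝ) <
      4 * π ^ 2 * ε * (k : ℝ) * (besselK 1 (π * ε * (k : ℝ))) ^ 2 /
        (2 * besselK 0 (π * ε * (k : ℝ)) * besselK 1 (π * ε * (k : ℝ)) +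
          π * ε * (k : ℝ) *
            ((besselK 0 (π * ε * (k : ℝ))) ^ 2 - (besselK 1 (π * ε * (k : ℝ))) ^ 2)) ∧
    4 * π ^ 2 * ε * (k : ℝ) * (besselK 1 (π * ε * (k : ℝ))) ^ 2 /
        (2 * besselK 0 (π * ε * (k : ℝ)) * besselK 1 (π * ε * (k : ℝ)) +
          π * ε * (k : ℝ) *
            ((besselK 0 (π * ε * (k : ℝ))) ^ 2 - (besselK 1 (π * ε * (k : ℝ))) ^ 2)) <
      4 * π ^ 2 * ε * (k : ℝ) + 2 * π := by
  have hk' : (0 : ℝ) < k := Nat.cast_pos.2 hk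
  have hz : 0 < π * ε * (k : ℝ) := by positivity
  obtain ⟨hD, hlower, hupper⟩ := besselK_tangential_denominator_bounds hz
  refine ⟨hD, (lt_div_iff₀ hD).2 ?_, (div_lt_iff₀ hD).2 ?_⟩
  · exact mul_lt_mul_of_pos_left hlower (by positivity)
  · linear_combination (2 * π) * hupper
end

section
/- There exists a constant C > 0 such that for every real ε with 0 < ε ≤ 1/2, setting λ_k = 2π²ε|k|·K₁(πε|k|)/K₀(πε|k|) for k ∈ ℤ with k ≠ 0, every family of complex numbers (û_k)_{k ∈ ℤ, k ≠ 0} with ∑_{k ≠ 0} (1 + k²)·|û_k|² < ∞ satisfies ∑_{k ≠ 0} λ_k²·|û_k|² ≤ (C/|log ε|)²·∑_{k ≠ 0} (1 + k²)·|û_k|². -/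
open Real

/-- The `k`-th eigenvalue of the slender-body Laplace PDE operator about a straight
periodic cylinder of radius `ε`. -/
noncomputable def lamL (ε : ℝ) (k : ℤ) : ℝ :=
  2 * π ^ 2 * ε * |(k : ℝ)| *
    (besselK 1 (π * ε * |(k : ℝ)|) / besselK 0 (π * ε * |(k : ℝ)|))

/-! Write `z = π ε |k|`, so that `λ_k = 2π · z K₁(z) / K₀(z)`. Since `cosh t ≤ sinh t + 1` for
`t ≥ 0` and `∫₀^∞ e^{-z cosh t} sinh t dt = e^{-z} / z`, we get `z K₁(z) ≤ e^{-z} + z K₀(z)`; on the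
interval where `cosh t ≤ 1 + 1/z` the integrand of `K₀` is at least `e^{-z-1}`, so
`K₀(z) ≥ e^{-z-1} log (1 + 1/z)`. Hence `λ_k ≤ 2π (e / log (1 + 1/z) + z)`. Bernoulli's inequality
gives `|k| log (1 + 1/z) ≥ log (1 + 1/(πε)) ≥ log (1/ε) / 3`, and `ε log (1/ε) ≤ 1` controls the
term `z`, so `λ_k ≤ 2π (3e + π) |k| / |log ε|`. -/

open MeasureTheory Set Filter Topology

lemma cosh_le_exp_of_nonneg {t : ℝ} (ht : 0 ≤ t) : cosh t ≤ exp t := by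
  rw [cosh_eq]
  linarith [exp_le_exp.2 (neg_le_self ht)]

lemma cosh_le_sinh_add_one {t : ℝ} (ht : 0 ≤ t) : cosh t ≤ sinh t + 1 := by
  linarith [cosh_sub_sinh t, exp_le_one_iff.2 (neg_nonpos.2 ht)]

lemma self_le_two_mul_cosh (t : ℝ) : t ≤ 2 * cosh t := by
  rw [cosh_eq]
  linarith [add_one_le_exp t, exp_pos (-t)]

section BesselBounds

variable {z : ℝ}

lemma besselK_nonneg (j : ℕ) (z : ℝ) : 0 ≤ besselK j z :=
  setIntegral_nonneg measurableSet_Ioi fun t _ => by positivity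

lemma besselK_zero_eq_s18 (z : ℝ) : besselK 0 z = ∫ t in Ioi 0, exp (-z * cosh t) := by
  simp [besselK]

lemma besselK_one_eq_s18 (z : ℝ) : besselK 1 z = ∫ t in Ioi 0, exp (-z * cosh t) * cosh t := by
  simp [besselK]

lemma integrableOn_exp_neg_mul_cosh (hz : 0 < z) :
    IntegrableOn (fun t => exp (-z * cosh t)) (Ioi 0) := by
  refine (exp_neg_integrableOn_Ioi 0 (half_pos hz)).mono' (by fun_prop) ?_
  filter_upwards with t
  rw [norm_of_nonneg (exp_pos _).le, exp_le_exp]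
  nlinarith [self_le_two_mul_cosh t]

lemma hasDerivAt_neg_exp_neg_mul_cosh_div (hz : z ≠ 0) (t : ℝ) :
    HasDerivAt (fun t => -exp (-z * cosh t) / z) (exp (-z * cosh t) * sinh t) t :=
  (((hasDerivAt_cosh t).const_mul (-z)).exp.neg.div_const z).congr_deriv (by field_simp)

lemma tendsto_neg_exp_neg_mul_cosh_div_atTop (hz : 0 < z) :
    Tendsto (fun t => -exp (-z * cosh t) / z) atTop (𝓝 0) := by
  have hcosh : Tendsto cosh atTop atTop :=
    tendsto_atTop_mono (fun t => by simp only [id]; linarith [self_le_two_mul_cosh t])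
      (tendsto_id.atTop_div_const two_pos)
  simpa using
    (tendsto_exp_atBot.comp (hcosh.const_mul_atTop_of_neg (neg_lt_zero.2 hz))).neg.div_const z

lemma integrableOn_exp_neg_mul_cosh_mul_sinh (hz : 0 < z) :
    IntegrableOn (fun t => exp (-z * cosh t) * sinh t) (Ioi 0) :=
  integrableOn_Ioi_deriv_of_nonneg' (fun t _ => hasDerivAt_neg_exp_neg_mul_cosh_div hz.ne' t)
    (fun _ ht => mul_nonneg (exp_pos _).le (sinh_nonneg_iff.2 (le_of_lt ht)))
    (tendsto_neg_exp_neg_mul_cosh_div_atTop hz)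

lemma integral_exp_neg_mul_cosh_mul_sinh (hz : 0 < z) :
    ∫ t in Ioi 0, exp (-z * cosh t) * sinh t = exp (-z) / z := by
  rw [integral_Ioi_of_hasDerivAt_of_tendsto'
    (fun t _ => hasDerivAt_neg_exp_neg_mul_cosh_div hz.ne' t)
    (integrableOn_exp_neg_mul_cosh_mul_sinh hz) (tendsto_neg_exp_neg_mul_cosh_div_atTop hz)]
  simp [neg_div]

lemma besselK_one_le (hz : 0 < z) : besselK 1 z ≤ exp (-z) / z + besselK 0 z := by
  have hsum := (integrableOn_exp_neg_mul_cosh_mul_sinh hz).add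
    (integrableOn_exp_neg_mul_cosh hz)
  have hcosh : IntegrableOn (fun t => exp (-z * cosh t) * cosh t) (Ioi 0) := by
    refine hsum.mono' (by fun_prop) ?_
    filter_upwards [ae_restrict_mem measurableSet_Ioi] with t ht
    rw [norm_of_nonneg (by positivity), Pi.add_apply]
    nlinarith [cosh_le_sinh_add_one (le_of_lt ht), exp_pos (-z * cosh t)]
  rw [besselK_one_eq_s18, besselK_zero_eq_s18, ← integral_exp_neg_mul_cosh_mul_sinh hz,
    ← integral_add (integrableOn_exp_neg_mul_cosh_mul_sinh hz) (integrableOn_exp_neg_mul_cosh hz)]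
  refine setIntegral_mono_on hcosh hsum measurableSet_Ioi fun t ht => ?_
  nlinarith [cosh_le_sinh_add_one (le_of_lt ht), exp_pos (-z * cosh t)]

lemma exp_neg_sub_one_mul_log_le_besselK_zero (hz : 0 < z) :
    exp (-z - 1) * log (1 + 1 / z) ≤ besselK 0 z := by
  have hint := integrableOn_exp_neg_mul_cosh hz
  set a := log (1 + 1 / z)
  have ha : 0 ≤ a := log_nonneg (by linarith [one_div_pos.2 hz])
  have hsub : Ioc 0 a ⊆ Ioi 0 := Ioc_subset_Ioi_self
  have hbound : ∀ t ∈ Ioc 0 a, exp (-z - 1) ≤ exp (-z * cosh t) := by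
    intro t ht
    have hexp : exp t ≤ 1 + 1 / z := by
      rw [← exp_log (by linarith [one_div_pos.2 hz] : 0 < 1 + 1 / z)]
      exact exp_le_exp.2 ht.2
    have : z * cosh t ≤ z + 1 := by
      calc z * cosh t ≤ z * (1 + 1 / z) :=
            mul_le_mul_of_nonneg_left ((cosh_le_exp_of_nonneg ht.1.le).trans hexp) hz.le
        _ = z + 1 := by field_simp
    exact exp_le_exp.2 (by linarith)
  calc exp (-z - 1) * a = exp (-z - 1) * volume.real (Ioc 0 a) := by simp [ha]
    _ ≤ ∫ t in Ioc 0 a, exp (-z * cosh t) :=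
        setIntegral_ge_of_const_le_real measurableSet_Ioc (by simp) hbound (hint.mono_set hsub)
    _ ≤ ∫ t in Ioi 0, exp (-z * cosh t) :=
        setIntegral_mono_set hint (ae_of_all _ fun t => (exp_pos _).le) hsub.eventuallyLE
    _ = besselK 0 z := (besselK_zero_eq_s18 z).symm

lemma mul_besselK_one_div_besselK_zero_le (hz : 0 < z) :
    z * besselK 1 z / besselK 0 z ≤ exp 1 / log (1 + 1 / z) + z := by
  have hlog : 0 < log (1 + 1 / z) := log_pos (by linarith [one_div_pos.2 hz])
  have hm : 0 < exp (-z - 1) * log (1 + 1 / z) := by positivity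
  have hK0 := exp_neg_sub_one_mul_log_le_besselK_zero hz
  have hK0pos : 0 < besselK 0 z := hm.trans_le hK0
  calc z * besselK 1 z / besselK 0 z ≤ z * (exp (-z) / z + besselK 0 z) / besselK 0 z := by
        gcongr
        exact besselK_one_le hz
    _ = exp (-z) / besselK 0 z + z := by field_simp
    _ ≤ exp (-z) / (exp (-z - 1) * log (1 + 1 / z)) + z := by gcongr
    _ = exp 1 / log (1 + 1 / z) + z := by
        rw [exp_sub]
        field_simp

end BesselBounds

lemma log_one_add_le_mul_log_one_add_div {a n : ℝ} (ha : 0 ≤ a) (hn : 1 ≤ n) :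
    log (1 + a) ≤ n * log (1 + a / n) := by
  have hn0 : 0 < n := by linarith
  have hbase : 0 < 1 + a / n := by positivity
  rw [← log_rpow hbase]
  refine log_le_log (by linarith) ?_
  calc 1 + a = 1 + n * (a / n) := by field_simp
    _ ≤ (1 + a / n) ^ n :=
        one_add_mul_self_le_rpow_one_add (by linarith [div_nonneg ha hn0.le]) hn

lemma mul_log_inv_le_one {ε : ℝ} (hε : 0 < ε) : ε * log ε⁻¹ ≤ 1 := by
  have := log_le_sub_one_of_pos (inv_pos.2 hε)
  calc ε * log ε⁻¹ ≤ ε * ε⁻¹ := mul_le_mul_of_nonneg_left (by linarith) hε.le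
    _ = 1 := mul_inv_cancel₀ hε.ne'

lemma log_inv_le_three_mul_log_one_add_inv {ε : ℝ} (hε : 0 < ε) (hε2 : ε ≤ 1 / 2) :
    log ε⁻¹ ≤ 3 * log (1 + 1 / (π * ε)) := by
  set x := 1 / (π * ε)
  have hx : ε⁻¹ / 4 ≤ x := by
    rw [show x = ε⁻¹ / π by simp only [x]; field_simp]
    exact div_le_div_of_nonneg_left (inv_pos.2 hε).le pi_pos pi_le_four
  have hε' : 2 ≤ ε⁻¹ := by
    rw [le_inv_comm₀ two_pos hε]; linarith
  calc log ε⁻¹ ≤ log ((1 + x) ^ 3) :=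
        log_le_log (by positivity) (by nlinarith [mul_le_mul hx hx (by positivity) (by positivity)])
    _ = 3 * log (1 + x) := by rw [log_pow]; norm_num

lemma lamL_nonneg {ε : ℝ} (hε : 0 ≤ ε) (k : ℤ) : 0 ≤ lamL ε k :=
  mul_nonneg (by positivity) (div_nonneg (besselK_nonneg 1 _) (besselK_nonneg 0 _))

lemma lamL_mul_log_inv_le {ε : ℝ} (hε : 0 < ε) (hε2 : ε ≤ 1 / 2) {k : ℤ} (hk : k ≠ 0) :
    lamL ε k * log ε⁻¹ ≤ 2 * π * (3 * exp 1 + π) * |(k : ℝ)| := by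
  have hn : 1 ≤ |(k : ℝ)| := by
    rw [← Int.cast_abs]; exact_mod_cast Int.one_le_abs hk
  set n := |(k : ℝ)|
  set L := log ε⁻¹
  have hL : 0 < L := log_pos ((one_lt_inv₀ hε).2 (by linarith))
  set z := π * ε * n
  have hz : 0 < z := by positivity
  have hlam : lamL ε k = 2 * π * (z * besselK 1 z / besselK 0 z) := by
    simp only [lamL, z, n]; ring
  have hlog : L ≤ 3 * n * log (1 + 1 / z) := by
    have := log_one_add_le_mul_log_one_add_div (one_div_pos.2 (by positivity : 0 < π * ε)).le hn
    rw [div_div] at this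
    linarith [log_inv_le_three_mul_log_one_add_inv hε hε2]
  have hexp : exp 1 / log (1 + 1 / z) * L ≤ 3 * exp 1 * n := by
    have hpos : 0 < log (1 + 1 / z) := log_pos (by linarith [one_div_pos.2 hz])
    rw [div_mul_eq_mul_div, div_le_iff₀ hpos]
    nlinarith [exp_pos 1]
  have hzL : z * L ≤ π * n := by
    calc z * L = π * n * (ε * L) := by ring
      _ ≤ π * n * 1 := mul_le_mul_of_nonneg_left (mul_log_inv_le_one hε) (by positivity)
      _ = π * n := mul_one _
  calc lamL ε k * L = 2 * π * ((z * besselK 1 z / besselK 0 z) * L) := by rw [hlam]; ring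
    _ ≤ 2 * π * ((exp 1 / log (1 + 1 / z) + z) * L) := by
        gcongr
        exact mul_besselK_one_div_besselK_zero_le hz
    _ ≤ 2 * π * (3 * exp 1 * n + π * n) := by
        gcongr
        linarith
    _ = 2 * π * (3 * exp 1 + π) * n := by ring

lemma lamL_sq_le {ε : ℝ} (hε : 0 < ε) (hε2 : ε ≤ 1 / 2) {k : ℤ} (hk : k ≠ 0) :
    lamL ε k ^ 2 ≤ (2 * π * (3 * exp 1 + π) / |log ε|) ^ 2 * (1 + (k : ℝ) ^ 2) := by
  have hlog : |log ε| = log ε⁻¹ := by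
    rw [abs_of_neg (log_neg hε (by linarith)), log_inv]
  have hL : 0 < log ε⁻¹ := log_pos ((one_lt_inv₀ hε).2 (by linarith))
  have hle : lamL ε k ≤ 2 * π * (3 * exp 1 + π) / |log ε| * |(k : ℝ)| := by
    rw [hlog, div_mul_eq_mul_div, le_div_iff₀ hL]
    exact lamL_mul_log_inv_le hε hε2 hk
  calc lamL ε k ^ 2 ≤ (2 * π * (3 * exp 1 + π) / |log ε| * |(k : ℝ)|) ^ 2 :=
        pow_le_pow_left₀ (lamL_nonneg hε.le k) hle 2
    _ = (2 * π * (3 * exp 1 + π) / |log ε|) ^ 2 * (k : ℝ) ^ 2 := by rw [mul_pow, sq_abs]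
    _ ≤ (2 * π * (3 * exp 1 + π) / |log ε|) ^ 2 * (1 + (k : ℝ) ^ 2) := by
        gcongr; linarith

lemma tsum_le_mul_tsum_of_le_mul {ι : Type*} {f g : ι → ℝ} {c : ℝ} (hf : ∀ i, 0 ≤ f i)
    (hfg : ∀ i, f i ≤ c * g i) (hg : Summable g) : ∑' i, f i ≤ c * ∑' i, g i := by
  rw [← tsum_mul_left]
  exact (Summable.of_nonneg_of_le hf hfg (hg.mul_left c)).tsum_le_tsum hfg (hg.mul_left c)

theorem laplace_wellposedness_estimate :
    ∃ C : ℝ, 0 < C ∧ ∀ ε : ℝ, 0 < ε → ε ≤ 1 / 2 →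
      ∀ u : ℤ → ℂ,
      (Summable fun k : {k : ℤ // k ≠ 0} =>
          (1 + ((k.1 : ℝ)) ^ 2) * ‖u k.1‖ ^ 2) →
      (∑' k : {k : ℤ // k ≠ 0}, (lamL ε k.1) ^ 2 * ‖u k.1‖ ^ 2) ≤
        (C / |Real.log ε|) ^ 2 *
          ∑' k : {k : ℤ // k ≠ 0}, (1 + ((k.1 : ℝ)) ^ 2) * ‖u k.1‖ ^ 2 := by
  refine ⟨2 * π * (3 * exp 1 + π), by positivity, fun ε hε hε2 u hsum => ?_⟩
  refine tsum_le_mul_tsum_of_le_mul (fun k => by positivity) (fun k => ?_) hsum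
  rw [← mul_assoc]
  exact mul_le_mul_of_nonneg_right (lamL_sq_le hε hε2 k.2) (by positivity)
end
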